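/- arXiv:2509.10322 — 5 statements merged into one kernel-verified Lean document; each statement's English description precedes it below -/
import Mathlib

section
/- Let Δ = {A₁, ..., Aₙ} be a non-empty finite set of formulas. A strict-tolerant inference Γ ⇒ Δ holds under all intuitionistic Kripke interpretations if and only if the strict-tolerant inference Γ ⇒ {A₁ ∨ ... ∨ Aₙ} holds under all intuitionistic Kripke interpretations. -/
/-- Formulas of the propositional language: atoms, ⊥, ∧, ∨, →. -/
inductive Fm : Type where
  | atom : ℕ → Fm
  | bot : Fm
  | and : Fm → Fm → Fm
  | or : Fm → Fm → Fm
  | imp : Fm → Fm → Fm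

/-- ¬A abbreviates A → ⊥. -/
def Fm.neg (A : Fm) : Fm := Fm.imp A Fm.bot

/-- A minimal Kripke interpretation: reflexive transitive frame, persistent
two-valued valuation, standard clauses for ∧, ∨, →; ⊥ may be true at worlds. -/
structure Interp where
  W : Type
  ne : Nonempty W
  R : W → W → Prop
  refl : ∀ w, R w w
  trans : ∀ {a b c}, R a b → R b c → R a c
  v : W → Fm → Bool
  persist : ∀ (A : Fm) {w w'}, R w w' → v w A = true → v w' A = true
  and_clause : ∀ w A B, v w (Fm.and A B) = (v w A && v w B)
  or_clause : ∀ w A B, v w (Fm.or A B) = (v w A || v w B)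
  imp_clause : ∀ w A B, v w (Fm.imp A B) = true ↔
    ∀ w', R w w' → (v w' A = false ∨ v w' B = true)

/-- An intuitionistic Kripke interpretation: a minimal one where ⊥ is never true. -/
structure IInterp extends Interp where
  bot_false : ∀ w, v w Fm.bot = false

/-- A is true in an interpretation iff it gets value 1 at all worlds. -/
def Interp.Tr (I : Interp) (A : Fm) : Prop := ∀ w, I.v w A = true

/-- A is false in an interpretation iff ¬A is true in it. -/
def Interp.Fls (I : Interp) (A : Fm) : Prop := I.Tr A.neg

/-- Strict-tolerant inference Γ ⇒ Δ (set conclusion): if all of Γ is true,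
not all of Δ is false. -/
def Interp.ST (I : Interp) (Γ Δ : Set Fm) : Prop :=
  (∀ B ∈ Γ, I.Tr B) → ¬ (∀ A ∈ Δ, I.Fls A)

/-- Strict-tolerant inference Γ ⇒ A with a single conclusion formula. -/
def Interp.STone (I : Interp) (Γ : Set Fm) (A : Fm) : Prop :=
  (∀ B ∈ Γ, I.Tr B) → ¬ I.Fls A

/-- Strict-tolerant metainference: either some premise inference fails
(all its premises true and its conclusion false), or the conclusion
inference holds (Γ not all true, or A not false). -/
def Interp.Meta (I : Interp) (prems : List (Set Fm × Fm)) (Γ : Set Fm) (A : Fm) : Prop :=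
  (∃ p ∈ prems, (∀ B ∈ p.1, I.Tr B) ∧ I.Fls p.2) ∨
  (¬ ∀ B ∈ Γ, I.Tr B) ∨ ¬ I.Fls A

/-- Classical Boolean evaluation of formulas. -/
def evalC (val : ℕ → Bool) : Fm → Bool
  | Fm.atom n => val n
  | Fm.bot => false
  | Fm.and A B => evalC val A && evalC val B
  | Fm.or A B => evalC val A || evalC val B
  | Fm.imp A B => !evalC val A || evalC val B

/-- Classical entailment. -/
def ClassEnt (Γ : Set Fm) (A : Fm) : Prop :=
  ∀ val : ℕ → Bool, (∀ B ∈ Γ, evalC val B = true) → evalC val A = true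

/-- Intuitionistic entailment over Kripke semantics. -/
def IntEnt (Γ : Set Fm) (A : Fm) : Prop :=
  ∀ I : IInterp, (∀ B ∈ Γ, I.toInterp.Tr B) → I.toInterp.Tr A

/-- Disjunction A₁ ∨ ... ∨ Aₙ of a nonempty list A :: l. -/
def bigOr : Fm → List Fm → Fm
  | A, [] => A
  | A, B :: l => Fm.or A (bigOr B l)

lemma fls_iff (I : IInterp) (A : Fm) :
    I.toInterp.Fls A ↔ ∀ w, I.v w A = false := by
  constructor
  · intro h w
    have := (I.imp_clause w A Fm.bot).mp (h w) w (I.refl w)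
    rcases this with h' | h'
    · exact h'
    · rw [I.bot_false w] at h'; exact absurd h' (by simp)
  · intro h w
    exact (I.imp_clause w A Fm.bot).mpr (fun w' _ => Or.inl (h w'))

lemma fls_or (I : IInterp) (A B : Fm) :
    I.toInterp.Fls (Fm.or A B) ↔ I.toInterp.Fls A ∧ I.toInterp.Fls B := by
  simp only [fls_iff, I.or_clause]
  constructor
  · intro h
    exact ⟨fun w => by have := h w; simp at this; exact this.1,
           fun w => by have := h w; simp at this; exact this.2⟩
  · intro ⟨h1, h2⟩ w; simp [h1 w, h2 w]

lemma fls_bigOr (I : IInterp) (A : Fm) (l : List Fm) :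
    I.toInterp.Fls (bigOr A l) ↔ ∀ B ∈ A :: l, I.toInterp.Fls B := by
  induction l generalizing A with
  | nil => simp [bigOr]
  | cons C l ih =>
    simp only [bigOr, fls_or, ih]
    constructor
    · rintro ⟨hA, h⟩ B hB
      rcases List.mem_cons.mp hB with h' | h'
      · exact h' ▸ hA
      · exact h _ h'
    · intro h
      exact ⟨h A (by simp), fun B hB => h B (by simpa using Or.inr hB)⟩

theorem stmt1 (Γ : Set Fm) (A : Fm) (l : List Fm) :
    (∀ I : IInterp, I.toInterp.ST Γ {B | B ∈ A :: l}) ↔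
      (∀ I : IInterp, I.toInterp.ST Γ {bigOr A l}) := by
  have key : ∀ I : IInterp,
      (∀ B ∈ ({B | B ∈ A :: l} : Set Fm), I.toInterp.Fls B) ↔
      (∀ B ∈ ({bigOr A l} : Set Fm), I.toInterp.Fls B) := by
    intro I
    constructor
    · intro h B hB
      rw [Set.mem_singleton_iff] at hB
      subst hB
      exact (fls_bigOr I A l).mpr h
    · intro h B hB
      exact (fls_bigOr I A l).mp (h _ rfl) B hB
  constructor
  · intro h I hΓ hf
    exact h I hΓ ((key I).mpr hf)
  · intro h I hΓ hf
    exact h I hΓ ((key I).mp hf)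
end

section
/- Strict-tolerant intuitionistic consequence collapses to classical consequence: Γ ⊨_ST^i A holds if and only if Γ ⊨_c A, where Γ ⊨_ST^i A means that every intuitionistic Kripke interpretation making all formulas of Γ true does not make A false. -/
-- Auxiliary material ------------------------------------------------------

def Fm.code : Fm → ℕ
  | Fm.atom n => Nat.pair 0 n
  | Fm.bot => Nat.pair 1 0
  | Fm.and A B => Nat.pair 2 (Nat.pair A.code B.code)
  | Fm.or A B => Nat.pair 3 (Nat.pair A.code B.code)
  | Fm.imp A B => Nat.pair 4 (Nat.pair A.code B.code)

lemma Fm.code_inj : Function.Injective Fm.code := by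
  intro a
  induction a with
  | atom n =>
      intro b hb; cases b <;> simp only [Fm.code, Nat.pair_eq_pair] at hb <;>
        first | (exfalso; omega) | rw [hb.2]
  | bot =>
      intro b hb; cases b <;> simp only [Fm.code, Nat.pair_eq_pair] at hb <;>
        first | (exfalso; omega) | rfl
  | and A B ihA ihB =>
      intro b hb; cases b <;> simp only [Fm.code, Nat.pair_eq_pair] at hb <;>
        first | (exfalso; omega) | rw [ihA hb.2.1, ihB hb.2.2]
  | or A B ihA ihB =>
      intro b hb; cases b <;> simp only [Fm.code, Nat.pair_eq_pair] at hb <;>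
        first | (exfalso; omega) | rw [ihA hb.2.1, ihB hb.2.2]
  | imp A B ihA ihB =>
      intro b hb; cases b <;> simp only [Fm.code, Nat.pair_eq_pair] at hb <;>
        first | (exfalso; omega) | rw [ihA hb.2.1, ihB hb.2.2]

instance : Countable Fm := ⟨Fm.code, Fm.code_inj⟩
instance : Nonempty Fm := ⟨Fm.bot⟩

/-- One-world classical interpretation induced by a Boolean valuation. -/
def classInterp (val : ℕ → Bool) : IInterp where
  W := PUnit
  ne := ⟨PUnit.unit⟩
  R _ _ := True
  refl _ := trivial
  trans _ _ := trivial
  v _ B := evalC val B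
  persist := by intro A w w' _ h; exact h
  and_clause _ _ _ := rfl
  or_clause _ _ _ := rfl
  imp_clause := fun w A B => by
    show (!evalC val A || evalC val B) = true ↔ _
    cases hA : evalC val A <;> cases hB : evalC val B <;> simp [hA, hB]
  bot_false _ := rfl

noncomputable section
open Classical

/-- The generic chain of worlds in an intuitionistic interpretation. -/
noncomputable def ch (I : IInterp) (e : ℕ → Fm) (w0 : I.W) : ℕ → I.W
  | 0 => w0
  | n+1 =>
      if h : ∃ w', I.R (ch I e w0 n) w' ∧ I.v w' (e n) = true then h.choose
      else ch I e w0 n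

variable (I : IInterp) (e : ℕ → Fm) (w0 : I.W)

lemma ch_step (n : ℕ) : I.R (ch I e w0 n) (ch I e w0 (n+1)) := by
  rw [ch]
  split
  next h => exact h.choose_spec.1
  next => exact I.refl _

lemma ch_le {m n : ℕ} (h : m ≤ n) : I.R (ch I e w0 m) (ch I e w0 n) := by
  induction n, h using Nat.le_induction with
  | base => exact I.refl _
  | succ n hmn ih => exact I.trans ih (ch_step I e w0 n)

lemma ch_gen (n : ℕ) :
    I.v (ch I e w0 (n+1)) (e n) = true ∨
      ∀ w', I.R (ch I e w0 n) w' → I.v w' (e n) = false := by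
  by_cases h : ∃ w', I.R (ch I e w0 n) w' ∧ I.v w' (e n) = true
  · left; rw [ch, dif_pos h]; exact h.choose_spec.2
  · right; intro w' hw'
    by_contra hne
    exact h ⟨w', hw', by revert hne; cases I.v w' (e n) <;> simp⟩

/-- Eventually true along the chain. -/
def Pch (B : Fm) : Prop := ∃ k, I.v (ch I e w0 k) B = true

noncomputable def chval : ℕ → Bool := fun n => decide (Pch I e w0 (Fm.atom n))

lemma key (he : Function.Surjective e) (B : Fm) :
    evalC (chval I e w0) B = true ↔ Pch I e w0 B := by
  induction B with
  | atom n => simp [evalC, chval]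
  | bot =>
      simp only [evalC, Pch]
      constructor
      · intro h; cases h
      · rintro ⟨k, hk⟩; rw [I.bot_false] at hk; cases hk
  | and A B ihA ihB =>
      simp only [evalC, Bool.and_eq_true, ihA, ihB, Pch]
      constructor
      · rintro ⟨⟨j, hj⟩, ⟨k, hk⟩⟩
        refine ⟨max j k, ?_⟩
        rw [I.and_clause, Bool.and_eq_true]
        exact ⟨I.persist A (ch_le I e w0 (le_max_left j k)) hj,
               I.persist B (ch_le I e w0 (le_max_right j k)) hk⟩
      · rintro ⟨k, hk⟩
        rw [I.and_clause, Bool.and_eq_true] at hk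
        exact ⟨⟨k, hk.1⟩, ⟨k, hk.2⟩⟩
  | or A B ihA ihB =>
      simp only [evalC, Bool.or_eq_true, ihA, ihB, Pch]
      constructor
      · rintro (⟨k, hk⟩ | ⟨k, hk⟩) <;> refine ⟨k, ?_⟩ <;>
          rw [I.or_clause, Bool.or_eq_true]
        · exact Or.inl hk
        · exact Or.inr hk
      · rintro ⟨k, hk⟩
        rw [I.or_clause, Bool.or_eq_true] at hk
        exact hk.imp (fun h => ⟨k, h⟩) (fun h => ⟨k, h⟩)
  | imp A B ihA ihB =>
      have : evalC (chval I e w0) (A.imp B) = true ↔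
          (evalC (chval I e w0) A = true → evalC (chval I e w0) B = true) := by
        simp [evalC]
        cases evalC (chval I e w0) A <;> simp
      rw [this, ihA, ihB]
      constructor
      · intro h
        by_cases hA : Pch I e w0 A
        · obtain ⟨k, hk⟩ := h hA
          refine ⟨k, (I.imp_clause _ A B).2 ?_⟩
          intro w' hw'
          exact Or.inr (I.persist B hw' hk)
        · obtain ⟨n, hn⟩ := he A
          rcases ch_gen I e w0 n with h1 | h2
          · exact absurd ⟨n+1, hn ▸ h1⟩ hA
          · refine ⟨n, (I.imp_clause _ A B).2 ?_⟩
            intro w' hw'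
            exact Or.inl (hn ▸ h2 w' hw')
      · rintro ⟨k, hk⟩ ⟨j, hj⟩
        have himp := I.persist (Fm.imp A B) (ch_le I e w0 (le_max_left k j)) hk
        have hAm := I.persist A (ch_le I e w0 (le_max_right k j)) hj
        rcases (I.imp_clause _ A B).1 himp _ (I.refl _) with hf | ht
        · rw [hAm] at hf; cases hf
        · exact ⟨max k j, ht⟩

end

theorem stmt4 (Γ : Set Fm) (A : Fm) :
    (∀ I : IInterp, I.toInterp.STone Γ A) ↔ ClassEnt Γ A := by
  constructor
  · intro h val hG
    have hst := h (classInterp val)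
    have htr : ∀ B ∈ Γ, (classInterp val).toInterp.Tr B := fun B hB _ => hG B hB
    have hnf := hst htr
    by_contra hA
    apply hnf
    intro w
    show (!evalC val A || evalC val Fm.bot) = true
    have : evalC val A = false := by
      revert hA; cases evalC val A <;> simp
    rw [this]; rfl
  · intro hc I hG hFls
    obtain ⟨e, he⟩ := exists_surjective_nat Fm
    obtain ⟨w0⟩ := I.ne
    have hA : evalC (chval I e w0) A = true :=
      hc _ (fun B hB => (key I e w0 he B).2 ⟨0, hG B hB _⟩)
    obtain ⟨k, hk⟩ := (key I e w0 he A).1 hA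
    have hneg := hFls (ch I e w0 k)
    rcases (I.imp_clause _ A Fm.bot).1 hneg _ (I.refl _) with hf | ht
    · rw [hk] at hf; cases hf
    · rw [I.bot_false] at ht; cases ht
end

section
/- There exist Γ and A with Γ ⊨_c A but Γ ⊭_ST^m A: specifically, ¬a → (a → b) is a classical tautology but the empty-premise strict-tolerant inference ⇒ ¬a → (a → b) fails in some minimal Kripke interpretation (i.e., the formula is false in that interpretation). -/
/-- Valuation on a two-world frame (worlds: `false ≤ true`). -/
def vv : Bool → Fm → Bool
  | _, Fm.atom n => decide (n = 0)
  | w, Fm.bot => w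
  | w, Fm.and A B => vv w A && vv w B
  | w, Fm.or A B => vv w A || vv w B
  | false, Fm.imp A B => (!vv false A || vv false B) && (!vv true A || vv true B)
  | true, Fm.imp A B => !vv true A || vv true B

lemma vv_persist (A : Fm) : vv false A = true → vv true A = true := by
  induction A with
  | atom n => simp [vv]
  | bot => simp [vv]
  | and A B ihA ihB => simp [vv]; tauto
  | or A B ihA ihB => simp [vv]; tauto
  | imp A B => simp [vv]

/-- The witnessing interpretation. -/
def I0 : Interp where
  W := Bool
  ne := ⟨false⟩
  R := fun a b => a ≤ b
  refl := fun w => le_refl w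
  trans := le_trans
  v := vv
  persist := by
    intro A w w' h hv
    cases w <;> cases w'
    · exact hv
    · exact vv_persist A hv
    · exact absurd h (by decide)
    · exact hv
  and_clause := fun w A B => by cases w <;> rfl
  or_clause := fun w A B => by cases w <;> rfl
  imp_clause := by
    intro w A B
    cases w with
    | false =>
      constructor
      · intro h w' _
        simp [vv] at h
        obtain ⟨h1, h2⟩ := h
        cases w'
        · tauto
        · tauto
      · intro h
        have h1 := h false (by simp)
        have h2 := h true (by simp)
        simp [vv]; tauto
    | true =>
      constructor
      · intro h w' hw
        cases w' <;> simp_all [vv] <;> tauto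
      · intro h
        have h2 := h true (by simp)
        simp [vv]; tauto

theorem stmt6 :
    ClassEnt ∅ (Fm.imp (Fm.neg (Fm.atom 0)) (Fm.imp (Fm.atom 0) (Fm.atom 1))) ∧
    ¬ (∀ I : Interp, I.STone ∅ (Fm.imp (Fm.neg (Fm.atom 0)) (Fm.imp (Fm.atom 0) (Fm.atom 1)))) := by
  constructor
  · intro val _
    simp [evalC, Fm.neg]
    cases val 0 <;> simp
  · intro h
    have := h I0
    apply this
    · intro B hB; simp at hB
    · intro w
      cases w <;> simp [I0, Fm.neg, vv]
end

section
/- The strict-tolerant minimal logic is empty: for every set of formulas Γ and formula A, Γ ⊭_ST^m A; that is, no strict-tolerant inference is valid over all minimal Kripke interpretations. -/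
def triv : Interp where
  W := Unit
  ne := ⟨()⟩
  R := fun _ _ => True
  refl := fun _ => trivial
  trans := fun _ _ => trivial
  v := fun _ _ => true
  persist := by intros; rfl
  and_clause := fun _ _ _ => rfl
  or_clause := fun _ _ _ => rfl
  imp_clause := fun _ _ _ => ⟨fun _ _ _ => Or.inr rfl, fun _ => rfl⟩

theorem stmt7 (Γ : Set Fm) (A : Fm) : ¬ (∀ I : Interp, I.STone Γ A) := by
  intro h
  exact h triv (fun B _ _ => rfl) (fun w => rfl)
end

section
/- The metainference 'from ⇒ A and ⇒ B infer ⇒ A∧B' is strict-tolerantly valid over classical interpretations but fails over intuitionistic (hence also minimal) Kripke interpretations: there is an intuitionistic interpretation in which neither a nor b is false (for atoms a, b) but a∧b is false. -/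
def R3 (a b : Fin 3) : Prop := a = b ∨ a = 0

instance : DecidablePred fun p : Fin 3 × Fin 3 => R3 p.1 p.2 := fun _ => instDecidableOr
instance (a b : Fin 3) : Decidable (R3 a b) := instDecidableOr

def v3 : Fin 3 → Fm → Bool
  | w, Fm.atom 0 => decide (w = 1)
  | w, Fm.atom 1 => decide (w = 2)
  | _, Fm.atom _ => false
  | _, Fm.bot => false
  | w, Fm.and A B => v3 w A && v3 w B
  | w, Fm.or A B => v3 w A || v3 w B
  | w, Fm.imp A B => decide (∀ w', R3 w w' → (v3 w' A = false ∨ v3 w' B = true))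

lemma R3.trans {a b c : Fin 3} (h1 : R3 a b) (h2 : R3 b c) : R3 a c := by
  rcases h1 with rfl | rfl
  · exact h2
  · exact Or.inr rfl

lemma v3_persist : ∀ (A : Fm) {w w' : Fin 3}, R3 w w' → v3 w A = true → v3 w' A = true := by
  intro A
  induction A with
  | atom n =>
    intro w w' h hv
    match n, hv with
    | 0, hv =>
      simp only [v3, decide_eq_true_eq] at hv ⊢
      subst hv; rcases h with h | h
      · exact h.symm
      · exact absurd h (by decide)
    | 1, hv =>
      simp only [v3, decide_eq_true_eq] at hv ⊢
      subst hv; rcases h with h | h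
      · exact h.symm
      · exact absurd h (by decide)
    | (n+2), hv => exact absurd hv (by simp [v3])
  | bot => intro w w' h hv; exact absurd hv (by simp [v3])
  | and A B ihA ihB =>
    intro w w' h hv
    simp only [v3, Bool.and_eq_true] at hv ⊢
    exact ⟨ihA h hv.1, ihB h hv.2⟩
  | or A B ihA ihB =>
    intro w w' h hv
    simp only [v3, Bool.or_eq_true] at hv ⊢
    rcases hv with hv | hv
    · exact Or.inl (ihA h hv)
    · exact Or.inr (ihB h hv)
  | imp A B ihA ihB =>
    intro w w' h hv
    simp only [v3, decide_eq_true_eq] at hv ⊢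
    intro w'' h'
    exact hv w'' (R3.trans h h')

def myInterp : IInterp where
  W := Fin 3
  ne := ⟨0⟩
  R := R3
  refl := fun w => Or.inl rfl
  trans := R3.trans
  v := v3
  persist := v3_persist
  and_clause := fun _ _ _ => rfl
  or_clause := fun _ _ _ => rfl
  imp_clause := fun w A B => by simp [v3]
  bot_false := fun _ => rfl

theorem stmt9 :
    (∀ (val : ℕ → Bool) (A B : Fm),
      ¬ evalC val (Fm.neg A) = true → ¬ evalC val (Fm.neg B) = true →
        ¬ evalC val (Fm.neg (Fm.and A B)) = true) ∧
    (∃ I : IInterp, ¬ I.toInterp.Fls (Fm.atom 0) ∧ ¬ I.toInterp.Fls (Fm.atom 1) ∧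
      I.toInterp.Fls (Fm.and (Fm.atom 0) (Fm.atom 1))) := by
  constructor
  · intro val A B hA hB
    simp only [Fm.neg, evalC, Bool.not_or, Bool.not_not] at *
    cases hvA : evalC val A <;> cases hvB : evalC val B <;> simp_all
  · refine ⟨myInterp, ?_, ?_, ?_⟩
    · intro h
      have h' : ∀ w : Fin 3, v3 w (Fm.atom 0).neg = true := h
      revert h'; decide
    · intro h
      have h' : ∀ w : Fin 3, v3 w (Fm.atom 1).neg = true := h
      revert h'; decide
    · show ∀ w : Fin 3, v3 w (Fm.and (Fm.atom 0) (Fm.atom 1)).neg = true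
      decide
end
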